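/- arXiv:1806.09122 — 3 statements merged into one kernel-verified Lean document; each statement's English description precedes it below -/
import Mathlib

section
/- Let (R, +, ·) be a hyperring. Define x Γ y iff there exist n ∈ ℕ, kᵢ ∈ ℕ, and elements x_{ij} ∈ R such that {x, y} ⊆ Σᵢ₌₁ⁿ Πⱼ₌₁^{kᵢ} x_{ij}. Then the transitive closure Γ* of Γ is a strongly regular equivalence relation on both (R, +) and (R, ·). -/
/-- A hyperoperation on `H`: every pair maps to a nonempty subset. -/
structure Hyperop (H : Type*) where
  op : H → H → Set H
  op_nonempty : ∀ x y, (op x y).Nonempty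

namespace Hyperop

variable {H : Type*}

/-- Extension of the hyperoperation to subsets. -/
def sop (h : Hyperop H) (A B : Set H) : Set H := ⋃ a ∈ A, ⋃ b ∈ B, h.op a b

/-- Associativity of a hyperoperation (on sets). -/
def IsAssoc (h : Hyperop H) : Prop :=
  ∀ x y z : H, h.sop (h.op x y) {z} = h.sop {x} (h.op y z)

/-- Reproduction axiom: `x ∘ H = H ∘ x = H`. -/
def IsReproductive (h : Hyperop H) : Prop :=
  ∀ x y : H, (∃ u, y ∈ h.op x u) ∧ (∃ v, y ∈ h.op v x)

/-- A relation `T` is strongly regular (on both sides) w.r.t. `h`. -/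
def StronglyRegular (h : Hyperop H) (T : H → H → Prop) : Prop :=
  ∀ x y, T x y → ∀ a : H,
    (∀ u ∈ h.op a x, ∀ v ∈ h.op a y, T u v) ∧
    (∀ u ∈ h.op x a, ∀ v ∈ h.op y a, T u v)

/-- `h.foldl x l` : the set `x ∘ l₁ ∘ ⋯ ∘ lₖ`. -/
def foldl (h : Hyperop H) : H → List H → Set H
  | x, [] => {x}
  | x, y :: l => ⋃ z ∈ h.op x y, h.foldl z l

/-- Hyper-"product" of a nonempty list of elements (empty list gives `∅`). -/
def listProd (h : Hyperop H) : List H → Set H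
  | [] => ∅
  | x :: l => h.foldl x l

/-- Fold a list of subsets onto a subset. -/
def setFold (h : Hyperop H) : Set H → List (Set H) → Set H
  | A, [] => A
  | A, B :: l => h.setFold (h.sop A B) l

end Hyperop

/-- `l'` is obtained from `l` by inserting one consecutive block of copies of `e`
(or is equal to `l`). -/
def InsertBlock {α : Type*} (e : α) (l l' : List α) : Prop :=
  l' = l ∨ ∃ (p q : List α) (k : ℕ), 1 ≤ k ∧ l = p ++ q ∧ l' = p ++ List.replicate k e ++ q

/-- A hyperring: `(R, +)` a hypergroup, `(R, ·)` a semi-hypergroup,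
with two-sided distributivity. -/
structure Hyperring (R : Type*) where
  add : Hyperop R
  mul : Hyperop R
  add_assoc : add.IsAssoc
  add_repro : add.IsReproductive
  mul_assoc : mul.IsAssoc
  left_distrib : ∀ x y z : R, mul.sop {x} (add.op y z) = add.sop (mul.op x y) (mul.op x z)
  right_distrib : ∀ x y z : R, mul.sop (add.op y z) {x} = add.sop (mul.op y x) (mul.op z x)

namespace Hyperring

variable {R : Type*}

/-- Sum of products: `ll` is a list of lists; each inner list is multiplied,
the results are added up. -/
def SOP (S : Hyperring R) : List (List R) → Set R
  | [] => ∅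
  | l :: t => S.add.setFold (S.mul.listProd l) (t.map S.mul.listProd)

/-- A valid sum-of-products expression: nonempty list of nonempty lists. -/
def ValidExpr (S : Hyperring R) (ll : List (List R)) : Prop :=
  ll ≠ [] ∧ ∀ l ∈ ll, l ≠ []

/-- The Vougiouklis relation `Γ`. -/
def gamma (S : Hyperring R) (x y : R) : Prop :=
  ∃ ll, S.ValidExpr ll ∧ x ∈ S.SOP ll ∧ y ∈ S.SOP ll

/-- The relation `α₊` : permuting the summands. -/
def alphaPlus (S : Hyperring R) (x y : R) : Prop :=
  ∃ ll ll', S.ValidExpr ll ∧ ll.Perm ll' ∧ x ∈ S.SOP ll ∧ y ∈ S.SOP ll'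

/-- The relation `α×` : permuting the factors inside each product. -/
def alphaTimes (S : Hyperring R) (x y : R) : Prop :=
  ∃ ll ll', S.ValidExpr ll ∧ List.Forall₂ List.Perm ll ll' ∧ x ∈ S.SOP ll ∧ y ∈ S.SOP ll'

/-- The Davvaz–Vougiouklis relation `α` : permuting factors inside each
product and then permuting the summands. -/
def alpha (S : Hyperring R) (x y : R) : Prop :=
  ∃ ll mid ll', S.ValidExpr ll ∧ List.Forall₂ List.Perm ll mid ∧ mid.Perm ll' ∧
    x ∈ S.SOP ll ∧ y ∈ S.SOP ll'

/-- Condition `𝔓ₑ` : each product of the second expression is obtained from the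
corresponding product of the first by inserting a block of copies of `e`. -/
def CondP (S : Hyperring R) (e : R) (ll ll' : List (List R)) : Prop :=
  List.Forall₂ (InsertBlock e) ll ll'

/-- The relation `(λ^e_×)ₘ`. -/
def lamTimesN (S : Hyperring R) (e : R) (m : ℕ) (x y : R) : Prop :=
  ∃ ll ll', ll.length = m ∧ S.ValidExpr ll ∧ S.CondP e ll ll' ∧
    ((x ∈ S.SOP ll ∧ y ∈ S.SOP ll') ∨ (x ∈ S.SOP ll' ∧ y ∈ S.SOP ll))

/-- The relation `λ^e_×`. -/
def lamTimes (S : Hyperring R) (e : R) (x y : R) : Prop :=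
  ∃ m, 1 ≤ m ∧ S.lamTimesN e m x y

/-- The relation `λₑ = λ^e_× ∪ α₊`. -/
def lam (S : Hyperring R) (e : R) (x y : R) : Prop :=
  S.lamTimes e x y ∨ S.alphaPlus x y

/-- The relation `Λₑ = λ^e_× ∪ α`. -/
def Lam (S : Hyperring R) (e : R) (x y : R) : Prop :=
  S.lamTimes e x y ∨ S.alpha x y

/-- `M` is a `λₑ`-part. -/
def IsLamPart (S : Hyperring R) (e : R) (M : Set R) : Prop :=
  (∀ ll ll', S.ValidExpr ll → ll.Perm ll' → (S.SOP ll ∩ M).Nonempty → S.SOP ll' ⊆ M) ∧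
  (∀ ll ll', S.ValidExpr ll → (S.CondP e ll ll' ∨ S.CondP e ll' ll) →
      (S.SOP ll ∩ M).Nonempty → S.SOP ll' ⊆ M)

/-- A `λₑ`-strong hyperring. -/
def LamStrong (S : Hyperring R) (e : R) : Prop :=
  (∀ x y, Relation.TransGen (S.lam e) x y →
      (S.mul.op x e ∩ S.mul.op y e).Nonempty ∧ (S.mul.op e x ∩ S.mul.op e y).Nonempty) ∧
  (∀ x z, z ∈ S.mul.op x e → x ∈ S.mul.op z e) ∧
  (∀ x z, z ∈ S.mul.op e x → x ∈ S.mul.op e z)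

end Hyperring

/-!
Γ relates any two elements of a common sum-of-products set `S.SOP ll`. Adding an element `a`
on either side of such a set gives, by associativity of `+`, again a sum-of-products set (with
the extra summand `a`), and multiplying it by `a` gives, by associativity of `·` and
distributivity, the sum-of-products set in which every product gets the extra factor `a`.
Hence Γ is strongly regular for both hyperoperations, and strong regularity passes to the
transitive closure because hyperoperations take nonempty values.
-/

namespace Hyperop

variable {H : Type*} (h : Hyperop H)

@[simp]
lemma mem_sop {A B : Set H} {u : H} : u ∈ h.sop A B ↔ ∃ a ∈ A, ∃ b ∈ B, u ∈ h.op a b := by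
  simp [sop]

lemma op_subset_sop {A B : Set H} {a b : H} (ha : a ∈ A) (hb : b ∈ B) :
    h.op a b ⊆ h.sop A B :=
  fun _ hu => h.mem_sop.2 ⟨a, ha, b, hb, hu⟩

lemma sop_assoc (hassoc : h.IsAssoc) (A B C : Set H) :
    h.sop (h.sop A B) C = h.sop A (h.sop B C) := by
  have key : ∀ a b c u, (∃ w ∈ h.op a b, u ∈ h.op w c) ↔ ∃ w ∈ h.op b c, u ∈ h.op a w :=
    fun a b c u => by simpa using Set.ext_iff.1 (hassoc a b c) u
  ext u
  simp only [mem_sop]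
  constructor
  · rintro ⟨w, ⟨a, ha, b, hb, hw⟩, c, hc, hu⟩
    obtain ⟨w', hw', hu'⟩ := (key a b c u).1 ⟨w, hw, hu⟩
    exact ⟨a, ha, w', ⟨b, hb, c, hc, hw'⟩, hu'⟩
  · rintro ⟨a, ha, w, ⟨b, hb, c, hc, hw⟩, hu⟩
    obtain ⟨w', hw', hu'⟩ := (key a b c u).2 ⟨w, hw, hu⟩
    exact ⟨w', ⟨a, ha, b, hb, hw'⟩, c, hc, hu'⟩

lemma setFold_sop (hassoc : h.IsAssoc) (A B : Set H) (l : List (Set H)) :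
    h.setFold (h.sop A B) l = h.sop A (h.setFold B l) := by
  induction l generalizing B with
  | nil => rfl
  | cons C l ih => rw [setFold, h.sop_assoc hassoc, ih]; rfl

lemma setFold_append_singleton (A B : Set H) (l : List (Set H)) :
    h.setFold A (l ++ [B]) = h.sop (h.setFold A l) B := by
  induction l generalizing A with
  | nil => rfl
  | cons C l ih => exact ih _

lemma biUnion_foldl (A : Set H) (l : List H) :
    ⋃ x ∈ A, h.foldl x l = h.setFold A (l.map ({·})) := by
  induction l generalizing A with
  | nil => exact Set.biUnion_of_singleton A
  | cons y l ih =>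
    rw [List.map_cons, setFold, ← ih]
    ext u
    simp [foldl]

lemma foldl_eq_setFold (x : H) (l : List H) : h.foldl x l = h.setFold {x} (l.map ({·})) := by
  rw [← biUnion_foldl, Set.biUnion_singleton]

lemma listProd_cons (hassoc : h.IsAssoc) (a : H) {l : List H} (hl : l ≠ []) :
    h.listProd (a :: l) = h.sop {a} (h.listProd l) := by
  obtain ⟨y, l, rfl⟩ := List.exists_cons_of_ne_nil hl
  rw [listProd, listProd, foldl_eq_setFold, foldl_eq_setFold, List.map_cons, setFold,
    setFold_sop h hassoc]

lemma listProd_append_singleton {l : List H} (hl : l ≠ []) (a : H) :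
    h.listProd (l ++ [a]) = h.sop (h.listProd l) {a} := by
  obtain ⟨y, l, rfl⟩ := List.exists_cons_of_ne_nil hl
  rw [List.cons_append, listProd, listProd, foldl_eq_setFold, foldl_eq_setFold, List.map_append,
    List.map_singleton, setFold_append_singleton]

lemma StronglyRegular.transGen {T : H → H → Prop} (hT : h.StronglyRegular T) :
    h.StronglyRegular (Relation.TransGen T) := by
  intro x y hxy a
  induction hxy with
  | single hxy =>
    exact ⟨fun u hu v hv => .single ((hT _ _ hxy a).1 u hu v hv),
      fun u hu v hv => .single ((hT _ _ hxy a).2 u hu v hv)⟩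
  | @tail b c _ hbc ih =>
    obtain ⟨w, hw⟩ := h.op_nonempty a b
    obtain ⟨w', hw'⟩ := h.op_nonempty b a
    exact ⟨fun u hu v hv => (ih.1 u hu w hw).tail ((hT _ _ hbc a).1 w hw v hv),
      fun u hu v hv => (ih.2 u hu w' hw').tail ((hT _ _ hbc a).2 w' hw' v hv)⟩

end Hyperop

namespace Hyperring

variable {R : Type*} (S : Hyperring R)

lemma left_distrib_sop (a : R) (A B : Set R) :
    S.mul.sop {a} (S.add.sop A B) = S.add.sop (S.mul.sop {a} A) (S.mul.sop {a} B) := by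
  have key : ∀ y z u, (∃ w ∈ S.add.op y z, u ∈ S.mul.op a w) ↔
      ∃ s ∈ S.mul.op a y, ∃ t ∈ S.mul.op a z, u ∈ S.add.op s t :=
    fun y z u => by simpa using Set.ext_iff.1 (S.left_distrib a y z) u
  ext u
  simp only [Hyperop.mem_sop, Set.mem_singleton_iff, exists_eq_left]
  constructor
  · rintro ⟨w, ⟨y, hy, z, hz, hw⟩, hu⟩
    obtain ⟨s, hs, t, ht, hu'⟩ := (key y z u).1 ⟨w, hw, hu⟩
    exact ⟨s, ⟨y, hy, hs⟩, t, ⟨z, hz, ht⟩, hu'⟩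
  · rintro ⟨s, ⟨y, hy, hs⟩, t, ⟨z, hz, ht⟩, hu⟩
    obtain ⟨w, hw, hu'⟩ := (key y z u).2 ⟨s, hs, t, ht, hu⟩
    exact ⟨w, ⟨y, hy, z, hz, hw⟩, hu'⟩

lemma right_distrib_sop (a : R) (A B : Set R) :
    S.mul.sop (S.add.sop A B) {a} = S.add.sop (S.mul.sop A {a}) (S.mul.sop B {a}) := by
  have key : ∀ y z u, (∃ w ∈ S.add.op y z, u ∈ S.mul.op w a) ↔
      ∃ s ∈ S.mul.op y a, ∃ t ∈ S.mul.op z a, u ∈ S.add.op s t :=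
    fun y z u => by simpa using Set.ext_iff.1 (S.right_distrib a y z) u
  ext u
  simp only [Hyperop.mem_sop, Set.mem_singleton_iff, exists_eq_left]
  constructor
  · rintro ⟨w, ⟨y, hy, z, hz, hw⟩, hu⟩
    obtain ⟨s, hs, t, ht, hu'⟩ := (key y z u).1 ⟨w, hw, hu⟩
    exact ⟨s, ⟨y, hy, hs⟩, t, ⟨z, hz, ht⟩, hu'⟩
  · rintro ⟨s, ⟨y, hy, hs⟩, t, ⟨z, hz, ht⟩, hu⟩
    obtain ⟨w, hw, hu'⟩ := (key y z u).2 ⟨s, hs, t, ht, hu⟩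
    exact ⟨w, ⟨y, hy, z, hz, hw⟩, hu'⟩

lemma SOP_cons (l : List R) {ll : List (List R)} (hll : ll ≠ []) :
    S.SOP (l :: ll) = S.add.sop (S.mul.listProd l) (S.SOP ll) := by
  obtain ⟨l', ll, rfl⟩ := List.exists_cons_of_ne_nil hll
  exact S.add.setFold_sop S.add_assoc _ _ _

lemma SOP_append_singleton {ll : List (List R)} (hll : ll ≠ []) (a : R) :
    S.SOP (ll ++ [[a]]) = S.add.sop (S.SOP ll) {a} := by
  obtain ⟨l, ll, rfl⟩ := List.exists_cons_of_ne_nil hll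
  show S.add.setFold _ ((ll ++ [[a]]).map _) = _
  rw [List.map_append]
  exact S.add.setFold_append_singleton _ _ _

variable {S} in
lemma ValidExpr.of_cons {l : List R} {ll : List (List R)} (hll : S.ValidExpr (l :: ll))
    (hne : ll ≠ []) : S.ValidExpr ll :=
  ⟨hne, fun l' hl' => hll.2 l' (List.mem_cons_of_mem l hl')⟩

variable {S} in
lemma ValidExpr.map {ll : List (List R)} (hll : S.ValidExpr ll) {f : List R → List R}
    (hf : ∀ l, f l ≠ []) : S.ValidExpr (ll.map f) :=
  ⟨by simpa using hll.1, by simpa using fun l _ => hf l⟩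

lemma mul_sop_singleton_SOP (a : R) {ll : List (List R)} (hll : S.ValidExpr ll) :
    S.mul.sop {a} (S.SOP ll) = S.SOP (ll.map (a :: ·)) := by
  induction ll with
  | nil => exact absurd rfl hll.1
  | cons l ll ih =>
    have hl : l ≠ [] := hll.2 l List.mem_cons_self
    rcases eq_or_ne ll [] with rfl | hne
    · exact (S.mul.listProd_cons S.mul_assoc a hl).symm
    · rw [List.map_cons, S.SOP_cons l hne, S.SOP_cons _ (by simpa using hne), S.left_distrib_sop,
        S.mul.listProd_cons S.mul_assoc a hl, ih (hll.of_cons hne)]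

lemma mul_SOP_sop_singleton (a : R) {ll : List (List R)} (hll : S.ValidExpr ll) :
    S.mul.sop (S.SOP ll) {a} = S.SOP (ll.map (· ++ [a])) := by
  induction ll with
  | nil => exact absurd rfl hll.1
  | cons l ll ih =>
    have hl : l ≠ [] := hll.2 l List.mem_cons_self
    rcases eq_or_ne ll [] with rfl | hne
    · exact (S.mul.listProd_append_singleton hl a).symm
    · rw [List.map_cons, S.SOP_cons l hne, S.SOP_cons _ (by simpa using hne), S.right_distrib_sop,
        S.mul.listProd_append_singleton hl a, ih (hll.of_cons hne)]

lemma gamma_refl (x : R) : S.gamma x x :=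
  ⟨[[x]], ⟨by simp, by simp⟩, rfl, rfl⟩

instance : Std.Symm S.gamma :=
  ⟨fun _ _ ⟨ll, hll, hx, hy⟩ => ⟨ll, hll, hy, hx⟩⟩

lemma stronglyRegular_gamma_of_sop_subset_SOP {h : Hyperop R}
    (hleft : ∀ a ll, S.ValidExpr ll → ∃ ll', S.ValidExpr ll' ∧ h.sop {a} (S.SOP ll) ⊆ S.SOP ll')
    (hright : ∀ a ll, S.ValidExpr ll → ∃ ll', S.ValidExpr ll' ∧ h.sop (S.SOP ll) {a} ⊆ S.SOP ll') :
    h.StronglyRegular S.gamma := by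
  rintro x y ⟨ll, hll, hx, hy⟩ a
  obtain ⟨l₁, hl₁, hsub₁⟩ := hleft a ll hll
  obtain ⟨l₂, hl₂, hsub₂⟩ := hright a ll hll
  exact ⟨fun u hu v hv => ⟨l₁, hl₁, hsub₁ (h.op_subset_sop (Set.mem_singleton a) hx hu),
      hsub₁ (h.op_subset_sop (Set.mem_singleton a) hy hv)⟩,
    fun u hu v hv => ⟨l₂, hl₂, hsub₂ (h.op_subset_sop hx (Set.mem_singleton a) hu),
      hsub₂ (h.op_subset_sop hy (Set.mem_singleton a) hv)⟩⟩

lemma add_stronglyRegular_gamma : S.add.StronglyRegular S.gamma :=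
  S.stronglyRegular_gamma_of_sop_subset_SOP
    (fun a ll hll => ⟨[a] :: ll, ⟨List.cons_ne_nil _ _, List.forall_mem_cons.2 ⟨by simp, hll.2⟩⟩,
      (S.SOP_cons [a] hll.1).ge⟩)
    (fun a ll hll => ⟨ll ++ [[a]], ⟨by simp, List.forall_mem_append.2 ⟨hll.2, by simp⟩⟩,
      (S.SOP_append_singleton hll.1 a).ge⟩)

lemma mul_stronglyRegular_gamma : S.mul.StronglyRegular S.gamma :=
  S.stronglyRegular_gamma_of_sop_subset_SOP
    (fun a ll hll =>
      ⟨_, hll.map (fun _ => List.cons_ne_nil _ _), (S.mul_sop_singleton_SOP a hll).le⟩)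
    (fun a ll hll => ⟨_, hll.map (fun _ => by simp), (S.mul_SOP_sop_singleton a hll).le⟩)

end Hyperring

/-- `Γ*` is a strongly regular equivalence relation on both
`(R, +)` and `(R, ·)`. -/
theorem stmt5 {R : Type*} (S : Hyperring R) :
    Equivalence (Relation.TransGen S.gamma) ∧
    S.add.StronglyRegular (Relation.TransGen S.gamma) ∧
    S.mul.StronglyRegular (Relation.TransGen S.gamma) := by
  exact ⟨⟨fun x => .single (S.gamma_refl x), fun h => Std.Symm.symm _ _ h, .trans⟩,
    S.add_stronglyRegular_gamma.transGen, S.mul_stronglyRegular_gamma.transGen⟩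
end

section
/- Let (R, +, ·) be a hyperring, e ∈ R, and for x ∈ R let P(x) = {y ∈ R : x λₑ y}. Then the following are equivalent: (1) λₑ is transitive; (2) λₑ*(x) = P(x) for every x ∈ R; (3) P(x) is a λₑ-part of R for every x ∈ R. -/
/-!
Conditions (1) and (2) are equivalent for any relation, since a relation equals its transitive
closure exactly when it is transitive. For (3), a set is a `λₑ`-part precisely when it is closed
under `λₑ`: every `λₑ`-step is witnessed by a pair of expressions related by `α₊` or `λ^e_×`,
and conversely. So all the sets `P(x)` are `λₑ`-parts iff `x λₑ z` and `z λₑ w` give `x λₑ w`,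
which is again transitivity.
-/

theorem Relation.transitive_iff_forall_setOf_transGen_eq {α : Type*} (r : α → α → Prop) :
    Transitive r ↔ ∀ x, {y | Relation.TransGen r x y} = {y | r x y} := by
  refine ⟨fun hr x => ?_, fun h x y z hxy hyz => ?_⟩
  · have : IsTrans α r := ⟨hr⟩
    rw [Relation.transGen_eq_self]
  · have hxz : z ∈ {y | Relation.TransGen r x y} := .tail (.single hxy) hyz
    rwa [h x] at hxz

namespace Hyperop

variable {H : Type*}

theorem sop_empty_left (h : Hyperop H) (B : Set H) : h.sop ∅ B = ∅ := by
  simp [sop]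

theorem sop_empty_right (h : Hyperop H) (A : Set H) : h.sop A ∅ = ∅ := by
  simp [sop]

theorem setFold_empty (h : Hyperop H) (L : List (Set H)) : h.setFold ∅ L = ∅ := by
  induction L with
  | nil => rfl
  | cons B t ih => rw [setFold, sop_empty_left, ih]

theorem setFold_eq_empty_of_mem (h : Hyperop H) (A : Set H) {L : List (Set H)}
    (hL : ∅ ∈ L) : h.setFold A L = ∅ := by
  induction L generalizing A with
  | nil => cases hL
  | cons B t ih =>
    rcases List.mem_cons.mp hL with rfl | ht
    · rw [setFold, sop_empty_right, setFold_empty]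
    · exact ih _ ht

end Hyperop

namespace Hyperring

variable {R : Type*} (S : Hyperring R) (e : R)

theorem validExpr_of_mem_SOP {ll : List (List R)} {w : R} (hw : w ∈ S.SOP ll) :
    S.ValidExpr ll := by
  refine ⟨by rintro rfl; exact hw, ?_⟩
  rintro l hl rfl
  obtain _ | ⟨a, t⟩ := ll
  · exact hw
  rcases List.mem_cons.mp hl with rfl | ht
  · rw [SOP, show S.mul.listProd [] = ∅ from rfl, Hyperop.setFold_empty] at hw
    exact hw
  · rw [SOP, Hyperop.setFold_eq_empty_of_mem _ _ (List.mem_map.mpr ⟨[], ht, rfl⟩)] at hw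
    exact hw

theorem lamTimes_of_condP {ll ll' : List (List R)} {z w : R} (hv : S.ValidExpr ll)
    (hc : S.CondP e ll ll') (hz : z ∈ S.SOP ll) (hw : w ∈ S.SOP ll') :
    S.lamTimes e z w ∧ S.lamTimes e w z :=
  have hlen : 1 ≤ ll.length := List.length_pos_iff.mpr hv.1
  ⟨⟨_, hlen, ll, ll', rfl, hv, hc, .inl ⟨hz, hw⟩⟩, ⟨_, hlen, ll, ll', rfl, hv, hc, .inr ⟨hw, hz⟩⟩⟩

theorem isLamPart_iff (M : Set R) :
    S.IsLamPart e M ↔ ∀ z w, S.lam e z w → z ∈ M → w ∈ M := by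
  constructor
  · rintro ⟨hperm, hcond⟩ z w (⟨-, -, ll, ll', -, hv, hc, hmem⟩ | ⟨ll, ll', hv, hp, hz, hw⟩) hzM
    · rcases hmem with ⟨hz, hw⟩ | ⟨hz, hw⟩
      · exact hcond ll ll' hv (.inl hc) ⟨z, hz, hzM⟩ hw
      · exact hcond ll' ll (S.validExpr_of_mem_SOP hz) (.inr hc) ⟨z, hz, hzM⟩ hw
    · exact hperm ll ll' hv hp ⟨z, hz, hzM⟩ hw
  · intro hM
    refine ⟨?_, ?_⟩
    · rintro ll ll' hv hp ⟨z, hz, hzM⟩ w hw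
      exact hM z w (.inr ⟨ll, ll', hv, hp, hz, hw⟩) hzM
    · rintro ll ll' hv (hc | hc) ⟨z, hz, hzM⟩ w hw
      · exact hM z w (.inl (S.lamTimes_of_condP e hv hc hz hw).1) hzM
      · exact hM z w (.inl (S.lamTimes_of_condP e (S.validExpr_of_mem_SOP hw) hc hw hz).2) hzM

theorem transitive_lam_iff_isLamPart :
    Transitive (S.lam e) ↔ ∀ x, S.IsLamPart e {y | S.lam e x y} := by
  simp only [isLamPart_iff, Set.mem_ofPred_eq]
  exact ⟨fun h x z w hzw hxz => h hxz hzw, fun h x z w hxz hzw => h x z w hzw hxz⟩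

end Hyperring

/-- transitivity of `λₑ` is equivalent to `λₑ*(x) = P(x)` for all
`x`, and to every `P(x)` being a `λₑ`-part. -/
theorem stmt14 {R : Type*} (S : Hyperring R) (e : R) :
    (Transitive (S.lam e) ↔
      ∀ x : R, {y | Relation.TransGen (S.lam e) x y} = {y | S.lam e x y}) ∧
    ((∀ x : R, {y | Relation.TransGen (S.lam e) x y} = {y | S.lam e x y}) ↔
      ∀ x : R, S.IsLamPart e {y | S.lam e x y}) := by
  have h12 := Relation.transitive_iff_forall_setOf_transGen_eq (S.lam e)
  exact ⟨h12, h12.symm.trans (S.transitive_lam_iff_isLamPart e)⟩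
end

section
/- If (R, +, ·) is a λₑ-strong hyperring, then the relation λₑ is transitive (hence λₑ = λₑ*). -/
namespace Hyperring

variable {R : Type*}

theorem SOP_pair (S : Hyperring R) (a b : R) : S.SOP [[a, b]] = S.mul.op a b := by
  simp [SOP, Hyperop.setFold, Hyperop.listProd, Hyperop.foldl]

theorem condP_refl (S : Hyperring R) (e : R) (ll : List (List R)) : S.CondP e ll ll :=
  List.forall₂_same.2 fun _ _ => Or.inl rfl

variable {S : Hyperring R}

/-- Inserting no block of `e` at all is allowed in `𝔓ₑ`, so `Γ ⊆ λ^e_×`. -/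
theorem lamTimes_of_gamma {e x y : R} (h : S.gamma x y) : S.lamTimes e x y := by
  obtain ⟨ll, hll, hx, hy⟩ := h
  have hlen : 1 ≤ ll.length := List.length_pos_iff.2 hll.1
  exact ⟨ll.length, hlen, ll, ll, rfl, hll, S.condP_refl e ll, Or.inl ⟨hx, hy⟩⟩

theorem gamma_of_mem_mul {a b x y : R} (hx : x ∈ S.mul.op a b) (hy : y ∈ S.mul.op a b) :
    S.gamma x y :=
  ⟨[[a, b]], ⟨by simp, by simp⟩, by rwa [SOP_pair], by rwa [SOP_pair]⟩

theorem LamStrong.exists_mem_mul_right {e x y : R} (hS : S.LamStrong e)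
    (h : Relation.TransGen (S.lam e) x y) : ∃ w, x ∈ S.mul.op w e ∧ y ∈ S.mul.op w e := by
  obtain ⟨⟨w, hxw, hyw⟩, -⟩ := hS.1 x y h
  exact ⟨w, hS.2.1 x w hxw, hS.2.1 y w hyw⟩

end Hyperring

/-- in a `λₑ`-strong hyperring the relation `λₑ` is transitive. -/
theorem stmt18 {R : Type*} (S : Hyperring R) (e : R) (hstrong : S.LamStrong e) :
    Transitive (S.lam e) := by
  intro x y z hxy hyz
  obtain ⟨w, hx, hz⟩ := hstrong.exists_mem_mul_right (.tail (.single hxy) hyz)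
  exact Or.inl (Hyperring.lamTimes_of_gamma (Hyperring.gamma_of_mem_mul hx hz))
end
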